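/- The seminorm induced by B on H₁ × H₂ is complete modulo null vectors: if (xₙ) is a sequence in H₁ × H₂ that is Cauchy with respect to B, i.e. for every ε > 0 there exists N such that B(xₙ − xₘ, xₙ − xₘ) < ε for all n, m ≥ N, then there exists x ∈ H₁ × H₂ such that B(xₙ − x, xₙ − x) → 0 as n → ∞. Hence the quotient of H₁ × H₂ by the null space {x : B(x,x) = 0}, with the inner product induced by B, is a Hilbert space. -/

import Mathlib

/-!
Write `p₂` for the projection onto `O₂`. Since `U` is unitary, the two cross terms of `B(z, z)`
are complex conjugates, and Pythagoras `‖z₂‖² = ‖p₂ z₂‖² + ‖z₂ - p₂ z₂‖²` gives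
`B(z, z) = ‖z₁ + U⁻¹ p₂ z₂‖² + ‖z₂ - p₂ z₂‖²`. So the `B`-seminorm is the pullback of the Hilbert
norm of `H₁ ⊕ O₂ᗮ` along a linear map which fixes `H₁ × O₂ᗮ`, hence is surjective. A `B`-Cauchy
sequence is mapped to a Cauchy sequence, and any preimage of its limit is a `B`-limit.
-/

open scoped InnerProductSpace ComplexConjugate

noncomputable section

variable {H₁ H₂ : Type*}
  [NormedAddCommGroup H₁] [InnerProductSpace ℂ H₁] [CompleteSpace H₁]
  [NormedAddCommGroup H₂] [InnerProductSpace ℂ H₂] [CompleteSpace H₂]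

/-- The pre-inner product `B` on `H₁ × H₂` of the minimally glued one-particle structure. -/
def gluedForm (O₁ : Submodule ℂ H₁) (O₂ : Submodule ℂ H₂)
    [Submodule.HasOrthogonalProjection O₁] [Submodule.HasOrthogonalProjection O₂]
    (U : O₁ ≃ₗᵢ[ℂ] O₂) (x y : H₁ × H₂) : ℂ :=
  ⟪x.1, y.1⟫_ℂ + ⟪x.2, y.2⟫_ℂ
    + ⟪x.1, (U.symm (Submodule.orthogonalProjectionOnto O₂ y.2) : H₁)⟫_ℂ
    + ⟪x.2, (U (Submodule.orthogonalProjectionOnto O₁ y.1) : H₂)⟫_ℂ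

section PullbackNorm

variable {E F 𝓕 : Type*} [AddCommGroup E] [NormedAddCommGroup F] [FunLike 𝓕 E F]
  [AddMonoidHomClass 𝓕 E F] (T : 𝓕) {x : ℕ → E}

theorem cauchySeq_map_of_norm_map_sub_sq_lt
    (hx : ∀ ε : ℝ, 0 < ε → ∃ N : ℕ, ∀ n m : ℕ, N ≤ n → N ≤ m → ‖T (x n - x m)‖ ^ 2 < ε) :
    CauchySeq fun n => T (x n) := by
  refine Metric.cauchySeq_iff.2 fun ε hε => ?_
  obtain ⟨N, hN⟩ := hx (ε ^ 2) (by positivity)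
  refine ⟨N, fun n hn m hm => ?_⟩
  rw [dist_eq_norm, ← map_sub]
  exact lt_of_pow_lt_pow_left₀ 2 hε.le (hN n m hn hm)

theorem exists_tendsto_norm_map_sub_sq [CompleteSpace F] (hT : Function.Surjective T)
    (hx : CauchySeq fun n => T (x n)) :
    ∃ l : E, Filter.Tendsto (fun n => ‖T (x n - l)‖ ^ 2) Filter.atTop (nhds 0) := by
  obtain ⟨y, hy⟩ := cauchySeq_tendsto_of_complete hx
  obtain ⟨l, rfl⟩ := hT y
  refine ⟨l, ?_⟩
  simpa only [map_sub, zero_pow two_ne_zero] using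
    (tendsto_iff_norm_sub_tendsto_zero.1 hy).pow 2

end PullbackNorm

section Gluing

variable {E₁ E₂ : Type*} [NormedAddCommGroup E₁] [InnerProductSpace ℂ E₁]
  [NormedAddCommGroup E₂] [InnerProductSpace ℂ E₂]
  {O₁ : Submodule ℂ E₁} (O₂ : Submodule ℂ E₂) [O₂.HasOrthogonalProjection] (U : O₁ ≃ₗᵢ[ℂ] O₂)

def gluedMap : E₁ × E₂ →ₗ[ℂ] WithLp 2 (E₁ × O₂ᗮ) where
  toFun z := WithLp.toLp 2
    (z.1 + U.symm (O₂.orthogonalProjectionOnto z.2), O₂ᗮ.orthogonalProjectionOnto z.2)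
  map_add' z w := by
    rw [← WithLp.toLp_add, Prod.mk_add_mk]
    congr 2
    · simp only [map_add, Submodule.coe_add]
      abel
    · simp
  map_smul' c z := by
    rw [RingHom.id_apply, ← WithLp.toLp_smul, Prod.smul_mk]
    simp

theorem gluedMap_surjective : Function.Surjective (gluedMap O₂ U) := by
  rintro ⟨a, b⟩
  exact ⟨(a, b), by simp [gluedMap]⟩

theorem inner_coe_map_eq_inner_symm_orthogonalProjectionOnto (v : O₁) (y : E₂) :
    ⟪y, (U v : E₂)⟫_ℂ = ⟪U.symm (O₂.orthogonalProjectionOnto y), v⟫_ℂ := by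
  rw [← Submodule.inner_orthogonalProjectionOnto_eq_of_mem_right, ← U.symm.inner_map_map,
    U.symm_apply_apply]

theorem re_gluedForm_self [O₁.HasOrthogonalProjection] (z : E₁ × E₂) :
    (gluedForm O₁ O₂ U z z).re = ‖gluedMap O₂ U z‖ ^ 2 := by
  obtain ⟨z₁, z₂⟩ := z
  have hcross : ⟪z₂, (U (O₁.orthogonalProjectionOnto z₁) : E₂)⟫_ℂ
      = conj ⟪z₁, (U.symm (O₂.orthogonalProjectionOnto z₂) : E₁)⟫_ℂ := by
    rw [inner_coe_map_eq_inner_symm_orthogonalProjectionOnto,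
      Submodule.inner_orthogonalProjectionOnto_eq_of_mem_left, inner_conj_symm]
  have hpyth := O₂.norm_sq_eq_add_norm_sq_projection z₂
  simp only [gluedForm, hcross, gluedMap, LinearMap.coe_mk, AddHom.coe_mk,
    WithLp.prod_norm_sq_eq_of_L2, WithLp.toLp_fst, WithLp.toLp_snd, norm_add_sq (𝕜 := ℂ),
    Submodule.norm_coe, LinearIsometryEquiv.norm_map, ← RCLike.re_to_complex, map_add,
    RCLike.conj_re, inner_self_eq_norm_sq]
  linear_combination hpyth

end Gluing

/-- Completeness of the seminorm induced by `B` modulo null vectors: every sequence in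
`H₁ × H₂` that is Cauchy with respect to `B` converges with respect to `B` to some element
of `H₁ × H₂`.  Hence the quotient of `H₁ × H₂` by the null space of `B`, with the inner
product induced by `B`, is a Hilbert space. -/
theorem gluedForm_complete (O₁ : Submodule ℂ H₁) (O₂ : Submodule ℂ H₂)
    [Submodule.HasOrthogonalProjection O₁] [Submodule.HasOrthogonalProjection O₂]
    (U : O₁ ≃ₗᵢ[ℂ] O₂) (x : ℕ → H₁ × H₂)
    (hx : ∀ ε : ℝ, 0 < ε → ∃ N : ℕ, ∀ n m : ℕ, N ≤ n → N ≤ m →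
      (gluedForm O₁ O₂ U (x n - x m) (x n - x m)).re < ε) :
    ∃ l : H₁ × H₂,
      Filter.Tendsto (fun n => (gluedForm O₁ O₂ U (x n - l) (x n - l)).re)
        Filter.atTop (nhds 0) := by
  simp only [re_gluedForm_self] at hx ⊢
  exact exists_tendsto_norm_map_sub_sq _ (gluedMap_surjective O₂ U)
    (cauchySeq_map_of_norm_map_sub_sq_lt _ hx)

end
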